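/- arXiv:1501.01833 — 2 statements merged into one kernel-verified Lean document; each statement's English description precedes it below -/
import Mathlib

section
/- For any r-regular graph G and any k with 0 ≤ k ≤ r, the k-limited packing number and the (r−k+1)-tuple domination number satisfy L_k(G) + γ_{×(r−k+1)}(G) = |V(G)|. -/
/-!
Every closed neighbourhood of an `r`-regular graph has `r + 1` vertices, so `X` meets each of
them in at most `k` vertices exactly when `Xᶜ` meets each of them in at least `r - k + 1`.
Complementation therefore exchanges `k`-limited packings with `(r - k + 1)`-tuple dominating
sets, turning a maximum packing into a minimum dominating set of complementary size.
-/

/-- The closed neighbourhood `N[v] = {v} ∪ N(v)` of a vertex `v`. -/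
def SimpleGraph.closedNbhd {V : Type*} (G : SimpleGraph V) (v : V) : Set V :=
  insert v (G.neighborSet v)

/-- A set `X ⊆ V(G)` is a `k`-limited packing if `|N[v] ∩ X| ≤ k` for every vertex `v`. -/
def SimpleGraph.IsLimitedPacking {V : Type*} (G : SimpleGraph V) (k : ℕ) (X : Set V) : Prop :=
  ∀ v : V, (X ∩ G.closedNbhd v).ncard ≤ k

/-- `L_k(G)`: the maximum cardinality of a `k`-limited packing in `G`. -/
noncomputable def SimpleGraph.limitedPackingNumber {V : Type*} (G : SimpleGraph V) (k : ℕ) : ℕ :=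
  sSup {n | ∃ X : Set V, G.IsLimitedPacking k X ∧ X.ncard = n}

/-- A set `D` is an `ℓ`-tuple dominating set if `|N[v] ∩ D| ≥ ℓ` for every vertex `v`. -/
def SimpleGraph.IsTupleDominating {V : Type*} (G : SimpleGraph V) (l : ℕ) (D : Set V) : Prop :=
  ∀ v : V, l ≤ (D ∩ G.closedNbhd v).ncard

/-- `γ_{×ℓ}(G)`: the minimum cardinality of an `ℓ`-tuple dominating set of `G`. -/
noncomputable def SimpleGraph.tupleDominationNumber {V : Type*} (G : SimpleGraph V) (l : ℕ) : ℕ :=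
  sInf {n | ∃ D : Set V, G.IsTupleDominating l D ∧ D.ncard = n}

theorem Set.ncard_inter_add_ncard_compl_inter {α : Type*} (X s : Set α) (hs : s.Finite) :
    (X ∩ s).ncard + (Xᶜ ∩ s).ncard = s.ncard := by
  rw [Set.inter_comm, ← Set.ncard_inter_add_ncard_sdiff_eq_ncard s X hs, Set.sdiff_eq_compl_inter]

theorem Set.sSup_ncard_add_sInf_ncard_eq_card {α : Type*} [Finite α] {P Q : Set α → Prop}
    (hPQ : ∀ X, P X ↔ Q Xᶜ) {X₀ : Set α} (hX₀ : P X₀) :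
    sSup {n | ∃ X, P X ∧ X.ncard = n} + sInf {n | ∃ D, Q D ∧ D.ncard = n} = Nat.card α := by
  set A := {n | ∃ X, P X ∧ X.ncard = n}
  set B := {n | ∃ D, Q D ∧ D.ncard = n}
  have hA : BddAbove A := ⟨Nat.card α, by rintro _ ⟨X, -, rfl⟩; exact Set.ncard_le_card X⟩
  obtain ⟨X, hX, hX_card⟩ : sSup A ∈ A := Nat.sSup_mem ⟨_, X₀, hX₀, rfl⟩ hA
  obtain ⟨D, hD, hD_card⟩ : sInf B ∈ B := Nat.sInf_mem ⟨_, Xᶜ, (hPQ X).mp hX, rfl⟩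
  have hB_le : sInf B ≤ Xᶜ.ncard := Nat.sInf_le ⟨Xᶜ, (hPQ X).mp hX, rfl⟩
  have hA_ge : Dᶜ.ncard ≤ sSup A := le_csSup hA ⟨Dᶜ, (hPQ _).mpr (by rwa [compl_compl]), rfl⟩
  have := Set.ncard_add_ncard_compl X
  have := Set.ncard_add_ncard_compl D
  omega

namespace SimpleGraph

variable {V : Type*} (G : SimpleGraph V)

theorem ncard_closedNbhd (v : V) [Fintype (G.neighborSet v)] :
    (G.closedNbhd v).ncard = G.degree v + 1 := by
  rw [closedNbhd, Set.ncard_insert_of_notMem (G.notMem_neighborSet_self),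
    Set.ncard_eq_toFinset_card', Set.toFinset_card, card_neighborSet_eq_degree]

theorem isLimitedPacking_iff_isTupleDominating_compl [G.LocallyFinite] {r k : ℕ}
    (hreg : G.IsRegularOfDegree r) (hk : k ≤ r) (X : Set V) :
    G.IsLimitedPacking k X ↔ G.IsTupleDominating (r - k + 1) Xᶜ := by
  refine forall_congr' fun v => ?_
  have hsplit := Set.ncard_inter_add_ncard_compl_inter X (G.closedNbhd v)
    ((G.neighborSet v).toFinite.insert v)
  rw [ncard_closedNbhd, hreg v] at hsplit
  omega

end SimpleGraph

/-- For an `r`-regular graph `G` and `0 ≤ k ≤ r`,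
`L_k(G) + γ_{×(r-k+1)}(G) = |V(G)|`. -/
theorem stmt9 {V : Type*} [Fintype V] (G : SimpleGraph V) [DecidableRel G.Adj] (r k : ℕ)
    (hreg : G.IsRegularOfDegree r) (hk : k ≤ r) :
    G.limitedPackingNumber k + G.tupleDominationNumber (r - k + 1) = Fintype.card V := by
  rw [← Nat.card_eq_fintype_card]
  exact Set.sSup_ncard_add_sInf_ncard_eq_card
    (G.isLimitedPacking_iff_isTupleDominating_compl hreg hk) (X₀ := ∅) fun v => by simp
end

section
/- If G is a cubic (3-regular) graph, then |V(G)|/4 ≤ L_2(G) ≤ |V(G)|/2. -/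
/-!
Double counting gives `∑ v, |N[v] ∩ X| = 4 |X|` for every `X` in a cubic graph, so a 2-limited
packing has `4 |X| ≤ 2 |V|`. For the lower bound take `X` maximal. If `N[z]` misses `X`, adding
`z` to `X` must overload some `N[w]`; then `w` is a neighbour of `z` outside `X` with exactly two
neighbours in `X`, so `z` is its only neighbour outside `X`. Hence `z ↦ w` is injective: the
vertices with `|N[v] ∩ X| = 0` are at most as many as those with `|N[v] ∩ X| = 2`, which makes
the average of `|N[v] ∩ X|` at least one, i.e. `|V| ≤ 4 |X|`.
-/

open Finset

namespace SimpleGraph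

variable {V : Type*} (G : SimpleGraph V)

lemma mem_closedNbhd_comm {u v : V} : u ∈ G.closedNbhd v ↔ v ∈ G.closedNbhd u := by
  simp only [closedNbhd, Set.mem_insert_iff, mem_neighborSet, adj_comm, eq_comm]

section LimitedPackingNumber

variable [Finite V] {k : ℕ}

lemma bddAbove_limitedPackingSizes :
    BddAbove {n | ∃ X : Set V, G.IsLimitedPacking k X ∧ X.ncard = n} := by
  refine ⟨Nat.card V, ?_⟩
  rintro _ ⟨X, -, rfl⟩
  exact Set.ncard_le_card X

lemma IsLimitedPacking.ncard_le_limitedPackingNumber {X : Set V} (hX : G.IsLimitedPacking k X) :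
    X.ncard ≤ G.limitedPackingNumber k :=
  le_csSup G.bddAbove_limitedPackingSizes ⟨X, hX, rfl⟩

lemma exists_isLimitedPacking_ncard_eq_limitedPackingNumber :
    ∃ X : Set V, G.IsLimitedPacking k X ∧ X.ncard = G.limitedPackingNumber k := by
  refine Nat.sSup_mem ?_ G.bddAbove_limitedPackingSizes
  exact ⟨0, ∅, fun v => by simp, Set.ncard_empty V⟩

end LimitedPackingNumber

variable [Fintype V] [DecidableEq V] [DecidableRel G.Adj]

def closedNbhdFinset (v : V) : Finset V :=
  insert v (G.neighborFinset v)

variable {G}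

lemma mem_closedNbhdFinset {u v : V} : u ∈ G.closedNbhdFinset v ↔ u ∈ G.closedNbhd v := by
  simp [closedNbhdFinset, closedNbhd]

lemma mem_closedNbhdFinset_comm {u v : V} :
    u ∈ G.closedNbhdFinset v ↔ v ∈ G.closedNbhdFinset u := by
  simpa only [mem_closedNbhdFinset] using G.mem_closedNbhd_comm

lemma card_closedNbhdFinset (v : V) : #(G.closedNbhdFinset v) = G.degree v + 1 := by
  rw [closedNbhdFinset, card_insert_of_notMem (by simp), card_neighborFinset_eq_degree]

lemma isLimitedPacking_coe_iff {k : ℕ} {X : Finset V} :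
    G.IsLimitedPacking k X ↔ ∀ v, #(X ∩ G.closedNbhdFinset v) ≤ k := by
  have hcoe (v : V) : (G.closedNbhdFinset v : Set V) = G.closedNbhd v := by
    ext; exact mem_closedNbhdFinset
  simp only [IsLimitedPacking, ← hcoe, ← coe_inter, Set.ncard_coe_finset]

lemma sum_card_inter_closedNbhdFinset (X : Finset V) :
    ∑ v, #(X ∩ G.closedNbhdFinset v) = ∑ x ∈ X, (G.degree x + 1) := by
  have := sum_card_bipartiteAbove_eq_sum_card_bipartiteBelow (s := univ) (t := X)
    (r := fun v x => x ∈ G.closedNbhdFinset v)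
  simp only [bipartiteAbove, bipartiteBelow, filter_mem_eq_inter] at this
  rw [this]
  refine sum_congr rfl fun x _ => ?_
  rw [← card_closedNbhdFinset]
  congr 1
  ext v
  simpa using mem_closedNbhdFinset_comm

lemma IsRegularOfDegree.sum_card_inter_closedNbhdFinset {d : ℕ} (hreg : G.IsRegularOfDegree d)
    (X : Finset V) : ∑ v, #(X ∩ G.closedNbhdFinset v) = (d + 1) * #X := by
  rw [G.sum_card_inter_closedNbhdFinset X, sum_congr rfl fun x _ => by rw [hreg x], sum_const,
    smul_eq_mul, mul_comm]

lemma IsLimitedPacking.mul_card_le {d k : ℕ} (hreg : G.IsRegularOfDegree d) {X : Finset V}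
    (hX : G.IsLimitedPacking k X) : (d + 1) * #X ≤ k * Fintype.card V := by
  rw [← hreg.sum_card_inter_closedNbhdFinset X, ← card_univ, mul_comm, ← smul_eq_mul,
    ← sum_const]
  exact sum_le_sum fun v _ => isLimitedPacking_coe_iff.mp hX v

lemma card_neighborFinset_sdiff_add_card_inter_closedNbhdFinset {X : Finset V} {w : V}
    (hw : w ∉ X) : #(G.neighborFinset w \ X) + #(X ∩ G.closedNbhdFinset w) = G.degree w := by
  rw [closedNbhdFinset, inter_insert_of_notMem hw, inter_comm, card_sdiff_add_card_inter,
    card_neighborFinset_eq_degree]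

lemma IsLimitedPacking.exists_saturated_neighbor {X : Finset V} (hX : G.IsLimitedPacking 2 X)
    (hmax : ∀ z ∉ X, ¬ G.IsLimitedPacking 2 ↑(insert z X)) {z : V}
    (hz : X ∩ G.closedNbhdFinset z = ∅) :
    ∃ w, (w ∉ X ∧ #(X ∩ G.closedNbhdFinset w) = 2) ∧ z ∈ G.neighborFinset w \ X := by
  have hnotMem {u : V} (hu : u ∈ G.closedNbhdFinset z) : u ∉ X := fun huX =>
    notMem_empty u (hz ▸ mem_inter_of_mem huX hu)
  have hzX : z ∉ X := hnotMem (mem_insert_self z _)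
  obtain ⟨w, hw⟩ : ∃ w, 2 < #(insert z X ∩ G.closedNbhdFinset w) := by
    simpa only [isLimitedPacking_coe_iff, not_forall, not_le] using hmax z hzX
  have hzw : z ∈ G.closedNbhdFinset w := by
    by_contra h
    rw [insert_inter_of_notMem h] at hw
    exact absurd (isLimitedPacking_coe_iff.mp hX w) (by omega)
  rw [insert_inter_of_mem hzw] at hw
  have hXw : #(X ∩ G.closedNbhdFinset w) = 2 :=
    le_antisymm (isLimitedPacking_coe_iff.mp hX w)
      (by have := card_insert_le z (X ∩ G.closedNbhdFinset w); omega)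
  have hwz : w ≠ z := by
    rintro rfl
    simp [hz] at hXw
  refine ⟨w, ⟨hnotMem (mem_closedNbhdFinset_comm.mp hzw), hXw⟩, mem_sdiff.mpr ⟨?_, hzX⟩⟩
  simpa [closedNbhdFinset, hwz.symm] using hzw

lemma IsLimitedPacking.card_le_four_mul_card (hreg : G.IsRegularOfDegree 3) {X : Finset V}
    (hX : G.IsLimitedPacking 2 X) (hmax : ∀ z ∉ X, ¬ G.IsLimitedPacking 2 ↑(insert z X)) :
    Fintype.card V ≤ 4 * #X := by
  set f : V → ℕ := fun v => #(X ∩ G.closedNbhdFinset v)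
  set B : Finset V := {w | w ∉ X ∧ f w = 2}
  have hZB : #{v | f v = 0} ≤ #B := calc
    #{v | f v = 0} ≤ #(B.biUnion fun w => G.neighborFinset w \ X) := by
      refine card_le_card fun z hz => ?_
      obtain ⟨w, hwB, hzw⟩ := hX.exists_saturated_neighbor hmax (card_eq_zero.mp (mem_filter.mp hz).2)
      exact mem_biUnion.mpr ⟨w, mem_filter.mpr ⟨mem_univ w, hwB⟩, hzw⟩
    _ ≤ ∑ w ∈ B, #(G.neighborFinset w \ X) := card_biUnion_le
    _ ≤ ∑ w ∈ B, 1 := sum_le_sum fun w hw => by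
      obtain ⟨hwX, hfw⟩ := (mem_filter.mp hw).2
      have : #(G.neighborFinset w \ X) + f w = 3 :=
        hreg w ▸ card_neighborFinset_sdiff_add_card_inter_closedNbhdFinset hwX
      omega
    _ = #B := card_eq_sum_ones B |>.symm
  have hcount : #{v | ¬f v = 0} + #B ≤ ∑ v, f v := by
    rw [card_filter, card_filter, ← sum_add_distrib]
    refine sum_le_sum fun v _ => ?_
    have hv := isLimitedPacking_coe_iff.mp hX v
    split_ifs <;> omega
  have hsum : ∑ v, f v = 4 * #X := hreg.sum_card_inter_closedNbhdFinset X
  have hsplit := card_filter_add_card_filter_not (s := univ) (fun v => f v = 0)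
  rw [card_univ] at hsplit
  omega

end SimpleGraph

/-- For any cubic graph `G`, `|V(G)|/4 ≤ L_2(G) ≤ |V(G)|/2`. -/
theorem stmt13 {V : Type*} [Fintype V] (G : SimpleGraph V) [DecidableRel G.Adj]
    (hreg : G.IsRegularOfDegree 3) :
    Fintype.card V ≤ 4 * G.limitedPackingNumber 2 ∧
      2 * G.limitedPackingNumber 2 ≤ Fintype.card V := by
  classical
  obtain ⟨X, hX, hcard⟩ := G.exists_isLimitedPacking_ncard_eq_limitedPackingNumber (k := 2)
  lift X to Finset V using X.toFinite
  rw [Set.ncard_coe_finset] at hcard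
  have hmax : ∀ z ∉ X, ¬ G.IsLimitedPacking 2 ↑(insert z X) := fun z hz hzX => by
    have := hzX.ncard_le_limitedPackingNumber
    rw [Set.ncard_coe_finset, card_insert_of_notMem hz] at this
    omega
  have hupper := hX.mul_card_le hreg
  rw [← hcard]
  exact ⟨hX.card_le_four_mul_card hreg hmax, by omega⟩
end
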